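/- Let f ∈ ℂ[[t²,t³]] be a power series whose coefficients of t⁰ and t² are zero and whose coefficient of t³ is nonzero (so f = t³·(a + c₁t + c₂t² + ⋯) with a ≠ 0). Then the quotient ℂ[[t²,t³]]/(f) of ℂ[[t²,t³]] by the ideal generated by f is spanned as a ℂ-vector space by the residue classes of 1, t² and t⁴; in particular dim_ℂ ℂ[[t²,t³]]/(f) ≤ 3. -/

import Mathlib

set_option synthInstance.maxHeartbeats 1000000
set_option maxHeartbeats 1000000

/-- The subalgebra `ℂ[[t²,t³]]` of `ℂ[[t]]`: power series whose coefficient of `t` vanishes. -/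
noncomputable def cuspAlgebra : Subalgebra ℂ (PowerSeries ℂ) where
  carrier := {f | PowerSeries.coeff (R := ℂ) 1 f = 0}
  add_mem' := by
    intro a b ha hb
    simp only [Set.mem_setOf_eq, map_add] at *
    rw [ha, hb, add_zero]
  mul_mem' := by
    intro a b ha hb
    simp only [Set.mem_setOf_eq] at *
    rw [PowerSeries.coeff_mul, Finset.Nat.sum_antidiagonal_eq_sum_range_succ_mk]
    simp [Finset.sum_range_succ, ha, hb]
  one_mem' := by simp [Set.mem_setOf_eq, PowerSeries.coeff_one]
  algebraMap_mem' := by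
    intro c
    simp [Set.mem_setOf_eq, PowerSeries.algebraMap_apply, PowerSeries.coeff_C]

/-- `t² ∈ ℂ[[t²,t³]]`. -/
noncomputable def tSq : cuspAlgebra :=
  ⟨PowerSeries.X ^ 2, show PowerSeries.coeff (R := ℂ) 1 (PowerSeries.X ^ 2) = 0 by
    simp [PowerSeries.coeff_X_pow]⟩

/-- `t⁴ ∈ ℂ[[t²,t³]]`. -/
noncomputable def tFour : cuspAlgebra :=
  ⟨PowerSeries.X ^ 4, show PowerSeries.coeff (R := ℂ) 1 (PowerSeries.X ^ 4) = 0 by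
    simp [PowerSeries.coeff_X_pow]⟩

/-!
Write `f = t³u` with `u` a unit of `ℂ[[t]]`. As `t²ℂ[[t]] ⊆ ℂ[[t²,t³]]`, the ideal `(f)` contains
`f · t²u⁻¹ℂ[[t]] = t⁵ℂ[[t]]`. Modulo `t⁵`, an element of `ℂ[[t²,t³]]` is a combination of
`1, t², t³, t⁴`, and `f ≡ f₃t³ + f₄t⁴ (mod t⁵)` with `f₃ ≠ 0` lets `f` and `t⁴` replace `t³`.
-/

section

open PowerSeries

theorem PowerSeries.exists_isUnit_eq_X_pow_mul_of_coeff_ne_zero {k : Type*} [Field k]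
    {F : k⟦X⟧} {n : ℕ}
    (hlt : ∀ m < n, coeff m F = 0) (hn : coeff n F ≠ 0) :
    ∃ u : k⟦X⟧, IsUnit u ∧ F = X ^ n * u := by
  obtain ⟨u, rfl⟩ := X_pow_dvd_iff.mpr hlt
  refine ⟨u, isUnit_iff_constantCoeff.mpr (isUnit_iff_ne_zero.mpr ?_), rfl⟩
  rwa [coeff_X_pow_mul', if_pos le_rfl, Nat.sub_self, coeff_zero_eq_constantCoeff_apply] at hn

theorem PowerSeries.exists_X_pow_five_dvd_sub_smul {k : Type*} [Field k] {F G : k⟦X⟧}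
    (hF1 : coeff 1 F = 0) (hG1 : coeff 1 G = 0) (hF3 : coeff 3 F ≠ 0) :
    ∃ a b c d : k, X ^ 5 ∣ G - (a • 1 + b • X ^ 2 + c • X ^ 4 + d • F) := by
  set d := coeff 3 G / coeff 3 F
  refine ⟨coeff 0 G - d * coeff 0 F, coeff 2 G - d * coeff 2 F, coeff 4 G - d * coeff 4 F, d,
    X_pow_dvd_iff.mpr fun m hm => ?_⟩
  interval_cases m <;> simp [coeff_X_pow, coeff_one, hF1, hG1, d, hF3]

theorem rank_le_three_of_span_eq_top {K V : Type*} [DivisionRing K] [AddCommGroup V] [Module K V]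
    {x y z : V} (h : Submodule.span K {x, y, z} = ⊤) : Module.rank K V ≤ 3 := by
  classical
  have := rank_span_finset_le (R := K) ({x, y, z} : Finset V)
  rw [Finset.coe_insert, Finset.coe_pair, h, rank_top] at this
  exact this.trans (by exact_mod_cast Finset.card_le_three)

theorem X_sq_mul_mem_cuspAlgebra (p : ℂ⟦X⟧) : X ^ 2 * p ∈ cuspAlgebra := by
  show coeff 1 (X ^ 2 * p) = 0
  simp [coeff_X_pow_mul']

theorem mem_span_singleton_of_X_pow_five_dvd {f g : cuspAlgebra} {u : ℂ⟦X⟧} (hu : IsUnit u)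
    (hf : (f : ℂ⟦X⟧) = X ^ 3 * u) (hg : X ^ 5 ∣ (g : ℂ⟦X⟧)) : g ∈ Ideal.span {f} := by
  obtain ⟨u, rfl⟩ := hu
  obtain ⟨p, hp⟩ := hg
  refine Ideal.mem_span_singleton'.mpr
    ⟨⟨X ^ 2 * (((u⁻¹ : ℂ⟦X⟧ˣ) : ℂ⟦X⟧) * p), X_sq_mul_mem_cuspAlgebra _⟩, ?_⟩
  ext1
  rw [Subalgebra.coe_mul, hf, hp]
  calc X ^ 2 * (↑u⁻¹ * p) * (X ^ 3 * ↑u) = X ^ 5 * p * (↑u⁻¹ * ↑u) := by ring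
    _ = X ^ 5 * p := by rw [Units.inv_mul, mul_one]

theorem span_mk_one_tSq_tFour_eq_top (f : cuspAlgebra)
    (h0 : coeff 0 (f : ℂ⟦X⟧) = 0) (h2 : coeff 2 (f : ℂ⟦X⟧) = 0)
    (h3 : coeff 3 (f : ℂ⟦X⟧) ≠ 0) :
    Submodule.span ℂ
        ({1, Ideal.Quotient.mk (Ideal.span {f}) tSq,
          Ideal.Quotient.mk (Ideal.span {f}) tFour} :
          Set (cuspAlgebra ⧸ Ideal.span {f})) = ⊤ := by
  obtain ⟨u, hu, hfu⟩ := exists_isUnit_eq_X_pow_mul_of_coeff_ne_zero (F := (f : ℂ⟦X⟧)) (n := 3)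
    (fun m hm => by interval_cases m <;> first | assumption | exact f.2) h3
  refine eq_top_iff.mpr fun x _ => ?_
  obtain ⟨g, rfl⟩ := Ideal.Quotient.mk_surjective x
  obtain ⟨a, b, c, d, hdvd⟩ := exists_X_pow_five_dvd_sub_smul f.2 g.2 h3
  have hrem : g - (a • 1 + b • tSq + c • tFour) ∈ Ideal.span {f} := by
    have hfar : g - (a • 1 + b • tSq + c • tFour + d • f) ∈ Ideal.span {f} :=
      mem_span_singleton_of_X_pow_five_dvd hu hfu hdvd
    have hdf : d • f ∈ Ideal.span {f} :=
      Submodule.smul_of_tower_mem _ d (Ideal.mem_span_singleton_self f)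
    convert add_mem hfar hdf using 1
    abel
  have hg : Ideal.Quotient.mk _ g = a • 1 + b • Ideal.Quotient.mk (Ideal.span {f}) tSq
      + c • Ideal.Quotient.mk (Ideal.span {f}) tFour := by
    rw [Ideal.Quotient.eq.mpr hrem, ← Ideal.Quotient.mkₐ_eq_mk ℂ]
    simp only [map_add, map_smul, map_one]
  rw [hg]
  refine add_mem (add_mem ?_ ?_) ?_ <;>
    exact Submodule.smul_mem _ _ (Submodule.subset_span (by simp))

end

/-- Let `f ∈ ℂ[[t²,t³]]` have zero coefficients of `t⁰` and `t²` and
nonzero coefficient of `t³`.  Then `ℂ[[t²,t³]]/(f)` is spanned as a `ℂ`-vector space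
by the residue classes of `1`, `t²` and `t⁴`; in particular its `ℂ`-dimension is at
most `3`. -/
theorem quotient_spanned_by_one_tSq_tFour
    (f : cuspAlgebra)
    (h0 : PowerSeries.coeff (R := ℂ) 0 (f : PowerSeries ℂ) = 0)
    (h2 : PowerSeries.coeff (R := ℂ) 2 (f : PowerSeries ℂ) = 0)
    (h3 : PowerSeries.coeff (R := ℂ) 3 (f : PowerSeries ℂ) ≠ 0) :
    Submodule.span ℂ
        ({1, Ideal.Quotient.mk (Ideal.span {f}) tSq,
          Ideal.Quotient.mk (Ideal.span {f}) tFour} :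
          Set (cuspAlgebra ⧸ Ideal.span {f})) = ⊤ ∧
      Module.rank ℂ (cuspAlgebra ⧸ Ideal.span {f}) ≤ 3 := by
  have hspan := span_mk_one_tSq_tFour_eq_top f h0 h2 h3
  exact ⟨hspan, rank_le_three_of_span_eq_top hspan⟩
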